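/- arXiv:1307.1878 — 4 statements merged into one kernel-verified Lean document; each statement's English description precedes it below -/
import Mathlib

section
/- Let G be a group and H a subgroup of finite index n, and let χ : H → ℂˣ be a group homomorphism (a one-dimensional character of H). Let ρ = Ind_H^G(χ) be the induced representation of G, realized on the n-dimensional complex vector space V_χ = { f : G → ℂ | f(hx) = χ(h)·f(x) for all h ∈ H, x ∈ G } with action (ρ(g)f)(x) = f(xg), and let r = Ind_H^G(1) be the representation induced from the trivial character of H, realized on V_1 in the same way. Then for every g ∈ G one has det(ρ(g)) · det(r(g))⁻¹ = χ(Ver(g)), where Ver : G → H^{ab} denotes the transfer (Verlagerung) homomorphism, i.e. det(ρ(g)) = (transfer of χ from H to G)(g) · det(r(g)). -/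
noncomputable section

/-- The space of the representation of `G` induced from a one-dimensional
character `χ` of a subgroup `H`: functions `f : G → ℂ` with
`f (h * x) = χ h * f x` for all `h ∈ H`, `x ∈ G`. -/
def indSpace {G : Type*} [Group G] (H : Subgroup G) (χ : H →* ℂˣ) :
    Submodule ℂ (G → ℂ) where
  carrier := {f | ∀ (h : H) (x : G), f ((h : G) * x) = (χ h : ℂ) * f x}
  add_mem' := by
    intro a b ha hb h x
    simp only [Pi.add_apply, ha h x, hb h x, mul_add]
  zero_mem' := by
    intro h x
    simp
  smul_mem' := by
    intro c a ha h x
    simp only [Pi.smul_apply, smul_eq_mul, ha h x]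
    ring

/-- The action of `g : G` on the induced representation space:
`(ρ(g) f)(x) = f (x * g)`. -/
def indAct {G : Type*} [Group G] (H : Subgroup G) (χ : H →* ℂˣ) (g : G) :
    indSpace H χ →ₗ[ℂ] indSpace H χ where
  toFun f := ⟨fun x => (f : G → ℂ) (x * g), by
    intro h x
    simpa [mul_assoc] using f.2 h (x * g)⟩
  map_add' f₁ f₂ := by ext x; rfl
  map_smul' c f := by ext x; rfl

/-!
Fix a left transversal `T` of `H`, with representative `t q` of the coset `q`. Evaluating at the
`(t q)⁻¹` identifies `Ind_H^G χ` with `G ⧸ H → ℂ`, and there `g` acts by the monomial matrix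
`c ↦ (q ↦ χ((t q)⁻¹ g t (g⁻¹ q)) · c (g⁻¹ q))`. Its determinant is the sign of the permutation
`q ↦ g⁻¹ q` times `∏_q χ((t q)⁻¹ g t (g⁻¹ q))`, and the product is exactly the transfer of `χ` at
`g` computed with `T`. The sign does not depend on `χ`, so it is `det r(g)`, which is nonzero
since `r` is a representation.
-/

open Matrix in
theorem LinearMap.det_eq_prod_mul_sign_of_apply_eq {R ι : Type*} [CommRing R] [Fintype ι]
    [DecidableEq ι] (L : (ι → R) →ₗ[R] ι → R) (d : ι → R) (σ : Equiv.Perm ι)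
    (hL : ∀ c i, L c i = d i * c (σ i)) :
    LinearMap.det L = (∏ i, d i) * Equiv.Perm.sign σ := by
  have : LinearMap.toMatrix' L = diagonal d * σ.permMatrix R := by
    ext i j
    rw [LinearMap.toMatrix'_apply, hL, diagonal_mul, Equiv.Perm.permMatrix, PEquiv.toMatrix_apply]
    simp [Pi.single_apply, eq_comm]
  rw [← LinearMap.det_toMatrix', this, det_mul, det_diagonal, det_permutation]

namespace Subgroup.IsComplement

variable {G : Type*} [Group G] {H : Subgroup G} {S T : Set G}

theorem inv_leftQuotientEquiv_mul_leftQuotientEquiv_mem (hS : IsComplement S H)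
    (hT : IsComplement T H) (q : G ⧸ H) :
    (hS.leftQuotientEquiv q : G)⁻¹ * hT.leftQuotientEquiv q ∈ H :=
  QuotientGroup.eq.mp
    ((hS.quotientGroupMk_leftQuotientEquiv q).trans (hT.quotientGroupMk_leftQuotientEquiv q).symm)

theorem mul_leftQuotientEquiv_inv_mem (hT : IsComplement T H) (x : G) :
    x * hT.leftQuotientEquiv ((x⁻¹ : G) : G ⧸ H) ∈ H := by
  simpa only [inv_inv] using
    QuotientGroup.eq.mp (hT.quotientGroupMk_leftQuotientEquiv ((x⁻¹ : G) : G ⧸ H)).symm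

end Subgroup.IsComplement

section

variable {G : Type*} [Group G] {H : Subgroup G} (χ : H →* ℂˣ)

theorem indAct_mul (g g' : G) : indAct H χ (g * g') = indAct H χ g ∘ₗ indAct H χ g' := by
  ext f x
  simp [indAct, mul_assoc]

theorem indAct_one : indAct H χ 1 = LinearMap.id := by
  ext f x
  simp [indAct]

theorem det_indAct_ne_zero (g : G) : LinearMap.det (indAct H χ g) ≠ 0 := by
  refine left_ne_zero_of_mul_eq_one (b := LinearMap.det (indAct H χ g⁻¹)) ?_
  rw [← LinearMap.det_comp, ← indAct_mul, mul_inv_cancel, indAct_one, LinearMap.det_id]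

end

namespace indSpace

variable {G : Type*} [Group G] {H : Subgroup G} {χ : H →* ℂˣ}

theorem apply_eq_of_eq_mul (f : indSpace H χ) (h : H) {x y : G} (hxy : x = h * y) :
    (f : G → ℂ) x = χ h * (f : G → ℂ) y :=
  hxy ▸ f.2 h y

variable (χ) (T : H.LeftTransversal)

/-- The inverses of a left transversal form a right transversal, and an element of the induced
space is freely determined by its values there. -/
def equivFun : indSpace H χ ≃ₗ[ℂ] (G ⧸ H → ℂ) where
  toFun f q := (f : G → ℂ) (T.2.leftQuotientEquiv q : G)⁻¹
  map_add' _ _ := rfl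
  map_smul' _ _ := rfl
  invFun c := ⟨fun x => χ ⟨_, T.2.mul_leftQuotientEquiv_inv_mem x⟩ * c ((x⁻¹ : G) : G ⧸ H), by
    intro h x
    have hq : (((h * x : G)⁻¹ : G) : G ⧸ H) = (x⁻¹ : G) := by
      rw [mul_inv_rev]
      exact QuotientGroup.mk_mul_of_mem _ (inv_mem h.2)
    have hw : (⟨_, T.2.mul_leftQuotientEquiv_inv_mem (h * x)⟩ : H) =
        h * ⟨_, T.2.mul_leftQuotientEquiv_inv_mem x⟩ :=
      Subtype.ext (by simp only [hq, Subgroup.coe_mul, mul_assoc])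
    dsimp only
    rw [hw, hq, map_mul, Units.val_mul, mul_assoc]⟩
  left_inv f := by
    ext x
    exact (apply_eq_of_eq_mul f _ (by simp)).symm
  right_inv c := by
    ext q
    have hw : (⟨_, T.2.mul_leftQuotientEquiv_inv_mem (T.2.leftQuotientEquiv q : G)⁻¹⟩ : H) = 1 :=
      Subtype.ext (by simp [T.2.quotientGroupMk_leftQuotientEquiv])
    have hq : ((((T.2.leftQuotientEquiv q : G)⁻¹)⁻¹ : G) : G ⧸ H) = q := by
      rw [inv_inv]
      exact T.2.quotientGroupMk_leftQuotientEquiv q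
    change (χ _ : ℂ) * c _ = c q
    rw [hw, hq, map_one, Units.val_one, one_mul]

/-- The coefficient is the factor at `q` of `diff χ T (g • T)`: the representative of `q` in
`g • T` is `g * t (g⁻¹ • q)`. -/
theorem equivFun_indAct (g : G) (f : indSpace H χ) (q : G ⧸ H) :
    equivFun χ T (indAct H χ g f) q =
      χ ⟨_, T.2.inv_leftQuotientEquiv_mul_leftQuotientEquiv_mem (g • T).2 q⟩ *
        equivFun χ T f (g⁻¹ • q) := by
  refine apply_eq_of_eq_mul f _ ?_
  simp [Subgroup.smul_apply_eq_smul_apply_inv_smul, mul_assoc]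

end indSpace

theorem det_indAct_eq_diff_mul_det_indAct_one {G : Type*} [Group G] {H : Subgroup G}
    [H.FiniteIndex] (χ : H →* ℂˣ) (T : H.LeftTransversal) (g : G) :
    LinearMap.det (indAct H χ g) =
      ((Subgroup.leftTransversals.diff χ T (g • T) : ℂˣ) : ℂ) * LinearMap.det (indAct H 1 g) := by
  let := H.fintypeQuotientOfFiniteIndex
  classical
  have h_det (ψ : H →* ℂˣ) : LinearMap.det (indAct H ψ g) =
      (∏ q, (ψ ⟨_, T.2.inv_leftQuotientEquiv_mul_leftQuotientEquiv_mem (g • T).2 q⟩ : ℂ)) *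
        Equiv.Perm.sign (MulAction.toPerm g⁻¹ : Equiv.Perm (G ⧸ H)) := by
    rw [← LinearMap.det_conj _ (indSpace.equivFun ψ T)]
    refine LinearMap.det_eq_prod_mul_sign_of_apply_eq _ _ _ fun c q => ?_
    simpa using indSpace.equivFun_indAct ψ T g ((indSpace.equivFun ψ T).symm c) q
  rw [h_det, h_det, Subgroup.leftTransversals.diff, Units.coe_prod]
  simp

/-- For `ρ = Ind_H^G χ` and `r = Ind_H^G 1`, we have
`det ρ(g) * det r(g)⁻¹ = χ(Ver g)`, where `Ver` is the transfer. -/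
theorem det_ind_mul_det_ind_one_inv_eq_transfer
    {G : Type*} [Group G] (H : Subgroup G) [H.FiniteIndex]
    (χ : H →* ℂˣ) (g : G) :
    LinearMap.det (indAct H χ g) * (LinearMap.det (indAct H (1 : H →* ℂˣ) g))⁻¹
      = ((MonoidHom.transfer χ g : ℂˣ) : ℂ) := by
  rw [det_indAct_eq_diff_mul_det_indAct_one χ default g, mul_inv_cancel_right₀
    (det_indAct_ne_zero 1 g), MonoidHom.transfer_def χ default g]

end
end

section
/- Every continuous group homomorphism χ : ℂˣ → ℂˣ has the form χ(z) = [z]^l · |z|_ℂ^t, i.e. there exist a unique integer l ∈ ℤ and a unique complex number t ∈ ℂ such that χ(z) = (z/|z|)^l · exp(t · log(|z|²)) for all z ∈ ℂˣ. -/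
/-!
Write `z = exp w`. The map `w ↦ χ (exp w)` is a continuous homomorphism `(ℂ, +) → ℂˣ`; on each
real line a continuous solution of `φ (s + t) = φ s * φ t` is differentiable (it is a difference
quotient of its own primitive), hence of the form `exp (c t)`. So `χ (exp w) = exp (a re w + b im w)`,
and `exp (2πi) = 1` forces `b ∈ iℤ`, which is the formula with `l = b / i` and `t = a / 2`.
Uniqueness follows by comparing derivatives at `0` of `s ↦ exp (c s)` along both lines.
-/

open scoped Real
open intervalIntegral

namespace Complex

theorem hasDerivAt_exp_mul_ofReal (a : ℂ) (t : ℝ) :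
    HasDerivAt (fun s : ℝ => exp (a * s)) (a * exp (a * t)) t := by
  simpa [mul_comm] using (((hasDerivAt_id (t : ℂ)).const_mul a).cexp).comp_ofReal

theorem eq_of_forall_exp_mul_ofReal_eq {a b : ℂ} (h : ∀ t : ℝ, exp (a * t) = exp (b * t)) :
    a = b := by
  have ha := hasDerivAt_exp_mul_ofReal a 0
  rw [funext h] at ha
  simpa using ha.unique (hasDerivAt_exp_mul_ofReal b 0)

theorem eq_exp_mul_of_hasDerivAt {φ : ℝ → ℂ} {c : ℂ} (h0 : φ 0 = 1)
    (hφ : ∀ t, HasDerivAt φ (c * φ t) t) (t : ℝ) : φ t = exp (c * t) := by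
  have hderiv : ∀ s, HasDerivAt (fun s : ℝ => φ s * exp (-c * s)) 0 s := fun s =>
    ((hφ s).mul (hasDerivAt_exp_mul_ofReal (-c) s)).congr_deriv (by ring)
  have hconst := is_const_of_deriv_eq_zero (fun s => (hderiv s).differentiableAt)
    (fun s => (hderiv s).deriv) t 0
  simp only [ofReal_zero, mul_zero, exp_zero, mul_one, h0, neg_mul, exp_neg] at hconst
  rwa [← div_eq_mul_inv, div_eq_one_iff_eq (exp_ne_zero _)] at hconst

theorem exists_hasDerivAt_eq_mul_of_map_add {φ : ℝ → ℂ} (hφ : Continuous φ) (h0 : φ 0 = 1)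
    (hadd : ∀ s t, φ (s + t) = φ s * φ t) : ∃ c : ℂ, ∀ t, HasDerivAt φ (c * φ t) t := by
  -- Integrating `φ (t + s) = φ t * φ s` over `s ∈ [0, h]` gives `F (t + h) - F t = φ t * F h`.
  set F : ℝ → ℂ := fun t => ∫ s in (0 : ℝ)..t, φ s
  have hF : ∀ t, HasDerivAt F (φ t) t := fun t => (hφ.integral_hasStrictDerivAt 0 t).hasDerivAt
  obtain ⟨h, hFh⟩ : ∃ h, F h ≠ 0 := by
    by_contra! hF0
    have := (hF 0).unique (funext hF0 ▸ hasDerivAt_const (0 : ℝ) (0 : ℂ))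
    exact one_ne_zero (h0 ▸ this)
  have hshift : ∀ t, φ t = (F (t + h) - F t) / F h := fun t => by
    have : F (t + h) - F t = φ t * F h := by
      rw [integral_interval_sub_left (hφ.intervalIntegrable _ _) (hφ.intervalIntegrable _ _)]
      simpa [hadd t] using (integral_comp_add_left φ t (a := 0) (b := h)).symm
    rw [this, mul_div_cancel_right₀ _ hFh]
  refine ⟨(φ h - 1) / F h, fun t => ?_⟩
  refine (((((hF (t + h)).comp_add_const t h).sub (hF t)).div_const (F h)).congr_deriv ?_
    ).congr_of_eventuallyEq (.of_forall hshift)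
  rw [add_comm t h, hadd h t]
  field_simp

theorem exists_eq_exp_mul_of_map_add {φ : ℝ → ℂ} (hφ : Continuous φ) (h0 : φ 0 = 1)
    (hadd : ∀ s t, φ (s + t) = φ s * φ t) : ∃ c : ℂ, ∀ t, φ t = exp (c * t) :=
  (exists_hasDerivAt_eq_mul_of_map_add hφ h0 hadd).imp fun _ => eq_exp_mul_of_hasDerivAt h0

theorem exists_eq_exp_re_im_of_map_add {ψ : ℂ → ℂ} (hψ : Continuous ψ) (h0 : ψ 0 = 1)
    (hadd : ∀ v w, ψ (v + w) = ψ v * ψ w) : ∃ a b : ℂ, ∀ w, ψ w = exp (a * w.re + b * w.im) := by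
  obtain ⟨a, ha⟩ := exists_eq_exp_mul_of_map_add (φ := fun s : ℝ => ψ s) (by fun_prop)
    (by simpa using h0) fun s t => by simpa using hadd s t
  obtain ⟨b, hb⟩ := exists_eq_exp_mul_of_map_add (φ := fun θ : ℝ => ψ (θ * I)) (by fun_prop)
    (by simpa using h0) fun s t => by simpa [add_mul] using hadd (s * I) (t * I)
  refine ⟨a, b, fun w => ?_⟩
  rw [← re_add_im w, hadd, ha, hb, ← exp_add]
  simp

noncomputable def expUnits (w : ℂ) : ℂˣ := Units.mk0 (exp w) (exp_ne_zero w)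

@[simp]
theorem val_expUnits (w : ℂ) : (expUnits w : ℂ) = exp w := rfl

theorem expUnits_add (v w : ℂ) : expUnits (v + w) = expUnits v * expUnits w :=
  Units.ext (exp_add v w)

theorem expUnits_log (z : ℂˣ) : expUnits (log z) = z :=
  Units.ext (exp_log z.ne_zero)

@[fun_prop]
theorem continuous_expUnits : Continuous expUnits :=
  Units.isEmbedding_val₀.continuous_iff.mpr continuous_exp

noncomputable def quasiChar (l : ℤ) (t : ℂ) (z : ℂˣ) : ℂ :=
  ((z : ℂ) / (‖(z : ℂ)‖ : ℂ)) ^ l * exp (t * Real.log (‖(z : ℂ)‖ ^ 2))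

theorem quasiChar_expUnits (l : ℤ) (t w : ℂ) :
    quasiChar l t (expUnits w) = exp (2 * t * w.re + l * I * w.im) := by
  have hphase : exp w / (Real.exp w.re : ℂ) = exp (w.im * I) := by
    rw [ofReal_exp, ← exp_sub]
    congr 1
    apply Complex.ext <;> simp
  rw [quasiChar, val_expUnits, norm_exp, hphase, Real.log_pow, Real.log_exp, ← exp_int_mul,
    ← exp_add]
  push_cast
  ring_nf

theorem quasiChar_injective : Function.Injective fun p : ℤ × ℂ => quasiChar p.1 p.2 := by
  rintro ⟨l, t⟩ ⟨l', t'⟩ h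
  have hexp : ∀ w : ℂ, exp (2 * t * w.re + l * I * w.im) = exp (2 * t' * w.re + l' * I * w.im) :=
    fun w => by simpa only [quasiChar_expUnits] using congrFun h (expUnits w)
  have ht : 2 * t = 2 * t' := eq_of_forall_exp_mul_ofReal_eq fun s => by simpa using hexp s
  have hl : (l : ℂ) * I = l' * I := eq_of_forall_exp_mul_ofReal_eq fun θ => by
    simpa using hexp (θ * I)
  simp_all

theorem exists_eq_quasiChar (χ : ℂˣ →* ℂˣ) (hχ : Continuous χ) :
    ∃ l t, ∀ z, (χ z : ℂ) = quasiChar l t z := by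
  obtain ⟨a, b, hψ⟩ := exists_eq_exp_re_im_of_map_add (ψ := fun w => (χ (expUnits w) : ℂ))
    (by fun_prop) (by simp [show expUnits 0 = 1 from Units.ext exp_zero])
    fun v w => by simp [expUnits_add]
  obtain ⟨n, rfl⟩ : ∃ n : ℤ, b = n * I := by
    have hper : exp (b * (2 * π)) = 1 := by
      simpa [show expUnits (2 * π * I) = 1 from Units.ext exp_two_pi_mul_I] using
        (hψ (2 * π * I)).symm
    obtain ⟨n, hn⟩ := exp_eq_one_iff.mp hper
    exact ⟨n, by field_simp at hn; linear_combination hn⟩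
  refine ⟨n, a / 2, fun z => ?_⟩
  rw [← expUnits_log z, quasiChar_expUnits, hψ]
  ring_nf

end Complex

/-- Every continuous character `χ : ℂˣ → ℂˣ` is of the form
`χ(z) = [z]^l · |z|_ℂ^t = (z/|z|)^l · exp(t · log |z|²)` for a unique pair
`(l, t) ∈ ℤ × ℂ`. -/
theorem continuous_units_complex_char_eq
    (χ : ℂˣ →* ℂˣ) (hχ : Continuous χ) :
    ∃! p : ℤ × ℂ, ∀ z : ℂˣ,
      ((χ z : ℂ)) = ((z : ℂ) / (‖(z : ℂ)‖ : ℂ)) ^ p.1 *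
        Complex.exp (p.2 * Real.log ((‖(z : ℂ)‖) ^ 2)) := by
  obtain ⟨l, t, h⟩ := Complex.exists_eq_quasiChar χ hχ
  exact ⟨(l, t), h, fun p hp =>
    Complex.quasiChar_injective (funext fun z => (hp z).symm.trans (h z))⟩
end

section
/- Let ρ : ℂˣ → GL(n, ℂ) be a continuous group homomorphism which is completely reducible, i.e. every ρ-invariant linear subspace of ℂⁿ admits a ρ-invariant complement. Then ρ is simultaneously diagonalizable by characters of ℂˣ: there exist P ∈ GL(n, ℂ), integers l₁, …, l_n ∈ ℤ and complex numbers t₁, …, t_n ∈ ℂ such that for every z ∈ ℂˣ, P ρ(z) P⁻¹ is the diagonal matrix with diagonal entries (z/|z|)^{l_i} · exp(t_i · log(|z|²)), i = 1, …, n. -/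
/-!
The operators `ρ z` commute, so on a minimal nonzero invariant subspace `q` each of them has an
eigenspace meeting `q` in a nonzero invariant subspace, which by minimality is `q` itself: every
nonzero invariant subspace contains a common eigenvector. By complete reducibility the common
eigenvectors span, and in a basis of them `ρ` is diagonal with continuous characters
`χᵢ : ℂˣ → ℂ` on the diagonal. For such a character, `w ↦ χ (exp w)` restricted to a real line is
a continuous solution of `f (x + y) = f x * f y`, hence `x ↦ exp (c x)`: averaging,
`f x * ∫ s in 0..a, f s = ∫ s in x..x+a, f s`, shows `f` is differentiable with `f' = c f`.
Periodicity of `exp` along `iℝ` makes the angular exponent an integer.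
-/

namespace Representation

section Monoid

variable {K G V : Type*} [Field K] [Monoid G] [AddCommGroup V] [Module K V]
  (ρ : Representation K G V)

def simultaneousEigenvectors : Set V := {v | ∀ g, ∃ c : K, ρ g v = c • v}

theorem exists_toMatrix_eq_diagonal {ι : Type*} [Fintype ι] [DecidableEq ι]
    (b : Module.Basis ι K V) (hb : ∀ i, b i ∈ ρ.simultaneousEigenvectors) :
    ∃ χ : ι → G →* K, ∀ g, LinearMap.toMatrix b b (ρ g) = Matrix.diagonal fun i => χ i g := by
  choose c hc using hb
  have hc_unique : ∀ i g (a : K), ρ g (b i) = a • b i → c i g = a := fun i g a h =>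
    smul_left_injective K (b.ne_zero i) ((hc i g).symm.trans h)
  refine ⟨fun i => { toFun := c i, map_one' := ?_, map_mul' := ?_ }, fun g => ?_⟩
  · exact hc_unique i 1 1 (by simp)
  · intro g h
    exact hc_unique i (g * h) _ (by
      rw [map_mul, Module.End.mul_apply, hc i h, map_smul, hc i g, smul_smul, mul_comm])
  · ext j i
    rcases eq_or_ne j i with rfl | hji
    · simp [LinearMap.toMatrix_apply, hc]
    · simp [LinearMap.toMatrix_apply, hc, hji]

end Monoid

section CommMonoid

variable {K G V : Type*} [Field K] [CommMonoid G] [AddCommGroup V] [Module K V]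
  (ρ : Representation K G V)

lemma commute_apply (g h : G) : Commute (ρ g) (ρ h) := by
  simp only [Commute, SemiconjBy, ← map_mul, mul_comm]

variable [IsAlgClosed K] [FiniteDimensional K V]

theorem exists_mem_simultaneousEigenvectors {p : Submodule K V} (hp : p ∈ ρ.invtSubmodule)
    (hp0 : p ≠ ⊥) : ∃ v ∈ p, v ≠ 0 ∧ v ∈ ρ.simultaneousEigenvectors := by
  obtain ⟨q, ⟨hq, hq0, hqp⟩, hmin⟩ := wellFounded_lt.has_min
    {q : Submodule K V | q ∈ ρ.invtSubmodule ∧ q ≠ ⊥ ∧ q ≤ p} ⟨p, hp, hp0, le_rfl⟩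
  rw [mem_invtSubmodule] at hq
  have hscalar : ∀ g, ∃ μ : K, q ≤ Module.End.eigenspace (ρ g) μ := by
    intro g
    have : Nontrivial q := Submodule.nontrivial_iff_ne_bot.mpr hq0
    obtain ⟨μ, hμ⟩ := Module.End.exists_eigenvalue ((ρ g).restrict (hq g))
    have hE : q ⊓ Module.End.eigenspace (ρ g) μ ∈ ρ.invtSubmodule := by
      rw [mem_invtSubmodule]
      exact fun h => Sublattice.inf_mem (hq h)
        (Module.End.mapsTo_genEigenspace_of_comm (ρ.commute_apply g h) μ 1)
    have hE0 : q ⊓ Module.End.eigenspace (ρ g) μ ≠ ⊥ := fun h => hμ <|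
      Module.End.eigenspace_restrict_eq_bot (hq g) (disjoint_iff.mpr (inf_comm q _ ▸ h))
    refine ⟨μ, ?_⟩
    by_contra hle
    exact hmin _ ⟨hE, hE0, inf_le_left.trans hqp⟩ (inf_lt_left.mpr hle)
  obtain ⟨v, hvq, hv0⟩ := Submodule.exists_mem_ne_zero_of_ne_bot hq0
  refine ⟨v, hqp hvq, hv0, fun g => ?_⟩
  obtain ⟨μ, hμ⟩ := hscalar g
  exact ⟨μ, Module.End.mem_eigenspace_iff.mp (hμ hvq)⟩

theorem span_simultaneousEigenvectors_eq_top
    (hρ : ∀ p ∈ ρ.invtSubmodule, ∃ q ∈ ρ.invtSubmodule, IsCompl p q) :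
    Submodule.span K ρ.simultaneousEigenvectors = ⊤ := by
  set E := Submodule.span K ρ.simultaneousEigenvectors
  have hE : E ∈ ρ.invtSubmodule := by
    rw [mem_invtSubmodule]
    intro g
    refine Submodule.span_le.mpr fun v hv => ?_
    obtain ⟨c, hc⟩ := hv g
    simpa [hc] using E.smul_mem c (Submodule.subset_span hv)
  obtain ⟨q, hq, hEq⟩ := hρ E hE
  by_contra hEtop
  have hq0 : q ≠ ⊥ := fun h => hEtop (by simpa [h] using hEq.sup_eq_top)
  obtain ⟨v, hvq, hv0, hv⟩ := ρ.exists_mem_simultaneousEigenvectors hq hq0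
  exact hv0 ((Submodule.disjoint_def.mp hEq.disjoint) v (Submodule.subset_span hv) hvq)

theorem exists_basis_simultaneousEigenvectors
    (hρ : ∀ p ∈ ρ.invtSubmodule, ∃ q ∈ ρ.invtSubmodule, IsCompl p q)
    {n : ℕ} (hn : Module.finrank K V = n) :
    ∃ b : Module.Basis (Fin n) K V, ∀ i, b i ∈ ρ.simultaneousEigenvectors := by
  have hspan := (ρ.span_simultaneousEigenvectors_eq_top hρ).ge
  let b := Module.Basis.ofSpan hspan
  refine ⟨b.reindex ((b.indexEquiv (Module.finBasis K V)).trans (finCongr hn)), fun i => ?_⟩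
  rw [Module.Basis.reindex_apply]
  exact Module.Basis.ofSpan_subset hspan (Set.mem_range_self _)

end CommMonoid

end Representation

theorem Module.Basis.exists_conj_eq_toMatrix {K ι : Type*} [CommRing K] [Fintype ι]
    [DecidableEq ι] (b : Module.Basis ι K (ι → K)) :
    ∃ P : GL ι K, ∀ A : Matrix ι ι K,
      (P : Matrix ι ι K) * A * ((P⁻¹ : GL ι K) : Matrix ι ι K) =
        LinearMap.toMatrix b b (Matrix.toLin' A) := by
  let e := Pi.basisFun K ι
  refine ⟨⟨b.toMatrix e, e.toMatrix b, b.toMatrix_mul_toMatrix_flip e,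
    e.toMatrix_mul_toMatrix_flip b⟩, fun A => ?_⟩
  rw [← basis_toMatrix_mul_linearMap_toMatrix_mul_basis_toMatrix b e b e,
    LinearMap.toMatrix_eq_toMatrix', LinearMap.toMatrix'_toLin']
  rfl

open Complex

theorem exists_eq_exp_mul_of_continuous_of_map_add {f : ℝ → ℂ} (hf : Continuous f)
    (h0 : f 0 = 1) (hadd : ∀ x y, f (x + y) = f x * f y) :
    ∃ c : ℂ, ∀ x : ℝ, f x = exp (c * x) := by
  set F : ℝ → ℂ := fun u => ∫ s in (0 : ℝ)..u, f s
  have hF : ∀ x, HasDerivAt F (f x) x := fun x =>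
    (hf.integral_hasStrictDerivAt 0 x).hasDerivAt
  obtain ⟨a, ha⟩ : ∃ a, F a ≠ 0 := by
    by_contra! hF0
    have := (hF 0).unique ((hasDerivAt_const 0 (0 : ℂ)).congr_of_eventuallyEq
      (Filter.Eventually.of_forall hF0))
    simp [h0] at this
  have hshift : ∀ x, F (x + a) - F x = f x * F a := by
    intro x
    show (∫ s in (0 : ℝ)..x + a, f s) - ∫ s in (0 : ℝ)..x, f s =
      f x * ∫ s in (0 : ℝ)..a, f s
    rw [sub_eq_iff_eq_add', ← intervalIntegral.integral_add_adjacent_intervals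
      (hf.intervalIntegrable 0 x) (hf.intervalIntegrable x (x + a)),
      ← intervalIntegral.integral_const_mul]
    simp only [← hadd]
    rw [intervalIntegral.integral_comp_add_left, add_zero]
  set b := (F a)⁻¹ * (f a - 1)
  have hderiv : ∀ x, HasDerivAt f (b * f x) x := by
    intro x
    have hdiff := (((hF (x + a)).comp_add_const x a).sub (hF x)).const_mul (F a)⁻¹
    refine (hdiff.congr_deriv (by rw [hadd]; ring)).congr_of_eventuallyEq
      (Filter.Eventually.of_forall fun y => ?_)
    simp only [Pi.sub_apply]
    rw [hshift, mul_comm, mul_assoc, mul_inv_cancel₀ ha, mul_one]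
  refine ⟨b, fun x => ?_⟩
  have hexp : ∀ y : ℝ, HasDerivAt (fun y : ℝ => exp (-(b * y))) (exp (-(b * y)) * -b) y := by
    intro y
    simpa using ((hasDerivAt_id (y : ℂ)).const_mul b).neg.cexp.comp_ofReal
  have hconst : ∀ y, HasDerivAt (fun y : ℝ => f y * exp (-(b * y))) 0 y := fun y =>
    ((hderiv y).mul (hexp y)).congr_deriv (by ring)
  have := is_const_of_deriv_eq_zero (fun y => (hconst y).differentiableAt)
    (fun y => (hconst y).deriv) x 0
  simp only [ofReal_zero, mul_zero, neg_zero, exp_zero, mul_one, h0] at this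
  rwa [exp_neg, mul_inv_eq_one₀ (exp_ne_zero _)] at this

theorem exists_eq_zpow_mul_exp_of_continuous_units (χ : ℂˣ →* ℂ) (hχ : Continuous χ) :
    ∃ (l : ℤ) (t : ℂ), ∀ z : ℂˣ,
      χ z = ((z : ℂ) / (‖(z : ℂ)‖ : ℂ)) ^ l * exp (t * Real.log (‖(z : ℂ)‖ ^ 2)) := by
  let e : ℂ → ℂˣ := fun w => Units.mk0 (exp w) (exp_ne_zero w)
  have he_add : ∀ v w, e (v + w) = e v * e w := fun v w => Units.ext (exp_add v w)
  have he_cont : Continuous e := Units.isEmbedding_val₀.continuous_iff.mpr continuous_exp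
  have hψ0 : χ (e 0) = 1 := by simp [e]
  obtain ⟨a, ha⟩ := exists_eq_exp_mul_of_continuous_of_map_add
    (f := fun x : ℝ => χ (e x)) (hχ.comp (he_cont.comp continuous_ofReal)) (by simpa using hψ0)
    (fun x y => by simp only [ofReal_add, he_add, map_mul])
  obtain ⟨c, hc⟩ := exists_eq_exp_mul_of_continuous_of_map_add
    (f := fun y : ℝ => χ (e (y * I)))
    (hχ.comp (he_cont.comp (continuous_ofReal.mul continuous_const))) (by simpa using hψ0)
    (fun x y => by simp only [ofReal_add, add_mul, he_add, map_mul])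
  -- `e (2πi) = 1` forces `c ∈ ℤ i`.
  obtain ⟨k, hk⟩ : ∃ k : ℤ, c = k * I := by
    have h2π : exp (c * (2 * Real.pi : ℝ)) = 1 := by
      rw [← hc, show e ((2 * Real.pi : ℝ) * I) = 1 from Units.ext (by simp [e])]
      exact map_one χ
    obtain ⟨k, hk⟩ := exp_eq_one_iff.mp h2π
    refine ⟨k, mul_right_cancel₀ (ofReal_ne_zero.mpr Real.two_pi_pos.ne') ?_⟩
    rw [hk]
    push_cast
    ring
  refine ⟨k, a / 2, fun z => ?_⟩
  have hz : (z : ℂ) ≠ 0 := z.ne_zero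
  have hχz : χ z = exp (a * Real.log ‖(z : ℂ)‖) * exp (c * arg z) := by
    rw [← ha, ← hc, ← map_mul, ← he_add]
    exact congrArg χ (Units.ext (exp_log hz).symm)
  have hphase : (z : ℂ) / (‖(z : ℂ)‖ : ℂ) = exp (arg z * I) := by
    rw [div_eq_iff (ofReal_ne_zero.mpr (norm_ne_zero_iff.mpr hz)), mul_comm]
    exact (norm_mul_exp_arg_mul_I (z : ℂ)).symm
  rw [hχz, hphase, ← exp_int_mul, hk, Real.log_pow, mul_comm]
  push_cast
  ring_nf

/-- A continuous, completely reducible representation `ρ : ℂˣ → GL(n, ℂ)` is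
simultaneously diagonalizable, with diagonal entries the characters
`z ↦ (z/|z|)^{lᵢ} · exp(tᵢ · log |z|²)` of `ℂˣ`. -/
theorem continuous_semisimple_rep_units_complex_diagonalizable
    {n : ℕ} (ρ : ℂˣ →* GL (Fin n) ℂ)
    (hcont : Continuous fun z : ℂˣ => (ρ z : Matrix (Fin n) (Fin n) ℂ))
    (hsemi : ∀ W : Submodule ℂ (Fin n → ℂ),
      (∀ (z : ℂˣ), ∀ v ∈ W, (ρ z : Matrix (Fin n) (Fin n) ℂ).mulVec v ∈ W) →
      ∃ W' : Submodule ℂ (Fin n → ℂ),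
        (∀ (z : ℂˣ), ∀ v ∈ W', (ρ z : Matrix (Fin n) (Fin n) ℂ).mulVec v ∈ W') ∧
        IsCompl W W') :
    ∃ (P : GL (Fin n) ℂ) (l : Fin n → ℤ) (t : Fin n → ℂ),
      ∀ z : ℂˣ,
        (P : Matrix (Fin n) (Fin n) ℂ) * (ρ z : Matrix (Fin n) (Fin n) ℂ) *
            ((P⁻¹ : GL (Fin n) ℂ) : Matrix (Fin n) (Fin n) ℂ)
          = Matrix.diagonal (fun i =>
              ((z : ℂ) / (‖(z : ℂ)‖ : ℂ)) ^ (l i) *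
                Complex.exp (t i * Real.log ((‖(z : ℂ)‖) ^ 2))) := by
  let ρ' : Representation ℂ ℂˣ (Fin n → ℂ) :=
    Matrix.toLinAlgEquiv'.toMonoidHom.comp ((Units.coeHom _).comp ρ)
  have hρ' : ∀ p ∈ ρ'.invtSubmodule, ∃ q ∈ ρ'.invtSubmodule, IsCompl p q := fun p hp => by
    obtain ⟨q, hq, hpq⟩ := hsemi p (ρ'.mem_invtSubmodule.mp hp)
    exact ⟨q, ρ'.mem_invtSubmodule.mpr hq, hpq⟩
  obtain ⟨b, hb⟩ := ρ'.exists_basis_simultaneousEigenvectors hρ' (Module.finrank_fin_fun ℂ)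
  obtain ⟨χ, hχ⟩ := ρ'.exists_toMatrix_eq_diagonal b hb
  obtain ⟨P, hP⟩ := b.exists_conj_eq_toMatrix
  have hconj : ∀ z, (P : Matrix (Fin n) (Fin n) ℂ) * (ρ z : Matrix (Fin n) (Fin n) ℂ) *
      ((P⁻¹ : GL (Fin n) ℂ) : Matrix (Fin n) (Fin n) ℂ) = Matrix.diagonal fun i => χ i z :=
    fun z => (hP _).trans (hχ z)
  have hχ_cont : ∀ i, Continuous (χ i) := fun i =>
    ((continuous_apply_apply i i).comp
      (((continuous_const (y := (P : Matrix (Fin n) (Fin n) ℂ))).matrix_mul hcont).matrix_mul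
        (continuous_const (y := ((P⁻¹ : GL (Fin n) ℂ) : Matrix (Fin n) (Fin n) ℂ))))).congr
      fun z => by simp only [hconj]; exact Matrix.diagonal_apply_eq _ i
  choose l t hlt using fun i => exists_eq_zpow_mul_exp_of_continuous_units (χ i) (hχ_cont i)
  exact ⟨P, l, t, fun z => by simp only [hconj, hlt]⟩
end

section
/- Let K = ℝ((t)) and L = ℂ((s)) be the fields of formal Laurent series over ℝ and ℂ respectively, and embed K into L by the field homomorphism that acts as the inclusion ℝ ↪ ℂ on coefficients and sends t to s². Then L is a Galois extension of (the image of) K of degree 4, and the Galois group Gal(L/K) is isomorphic to ℤ/2 × ℤ/2 (the Klein four-group). -/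
/-!
Write `s` for the variable of `ℂ⸨X⸩` (so that `ι t = s²`) and `i` for the constant `I`. Comparing
even and odd coefficients shows that `1, s, i, i s` is a basis of `ℂ((s))` over `ℝ((t))`, so the
degree is 4. As `s² = ι t` and `i² = -1`, an automorphism sends `s ↦ ±s` and `i ↦ ±i`, and is
determined by these two signs; in particular it is an involution. The substitution `s ↦ -s` and
coefficientwise conjugation are distinct and nontrivial, so together with their product they give
four automorphisms, the most a degree-4 extension can have. Hence the extension is Galois, and its
group, of order 4 and exponent 2, is the Klein four-group.
-/

open HahnSeries LaurentSeries Complex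

noncomputable section

namespace HahnSeries

variable {Γ R S : Type*} [AddCommMonoid Γ] [PartialOrder Γ]

section Twist

variable [CommSemiring R] (χ : Multiplicative Γ →* Rˣ)

def twist (x : R⟦Γ⟧) : R⟦Γ⟧ where
  coeff g := χ (.ofAdd g) * x.coeff g
  isPWO_support' := x.isPWO_support.mono (Function.support_mul_subset_right _ _)

@[simp]
lemma coeff_twist (x : R⟦Γ⟧) (g : Γ) : (twist χ x).coeff g = χ (.ofAdd g) * x.coeff g := rfl

lemma twist_twist (ψ : Multiplicative Γ →* Rˣ) (x : R⟦Γ⟧) :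
    twist χ (twist ψ x) = twist (χ * ψ) x := by
  ext g
  simp [mul_assoc]

@[simp]
lemma support_twist (x : R⟦Γ⟧) : (twist χ x).support = x.support := by
  ext g
  simp [Units.mul_right_eq_zero]

lemma twist_single (g : Γ) (r : R) : twist χ (single g r) = single g (χ (.ofAdd g) * r) := by
  ext g'
  rcases eq_or_ne g' g with rfl | hg
  · simp
  · simp [coeff_single_of_ne hg]

variable [IsOrderedCancelAddMonoid Γ]

lemma twist_mul (x y : R⟦Γ⟧) : twist χ (x * y) = twist χ x * twist χ y := by
  ext g
  simp only [coeff_twist, coeff_mul, support_twist, Finset.mul_sum]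
  refine Finset.sum_congr rfl fun ij hij => ?_
  rw [(Finset.mem_antidiagonal.mp hij).2.2.symm]
  simp only [ofAdd_add, map_mul, Units.val_mul]
  ring

def twistEquiv : R⟦Γ⟧ ≃+* R⟦Γ⟧ where
  toFun := twist χ
  invFun := twist χ⁻¹
  left_inv x := by ext; simp [twist_twist]
  right_inv x := by ext; simp [twist_twist]
  map_mul' := twist_mul χ
  map_add' x y := by ext; simp [mul_add]

@[simp]
lemma twistEquiv_apply (x : R⟦Γ⟧) : twistEquiv χ x = twist χ x := rfl

end Twist

variable [IsOrderedCancelAddMonoid Γ]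

def mapRingEquiv [Semiring R] [Semiring S] (e : R ≃+* S) : R⟦Γ⟧ ≃+* S⟦Γ⟧ where
  toFun x := x.map e
  invFun x := x.map e.symm
  left_inv x := by ext; simp
  right_inv x := by ext; simp
  map_mul' _ _ := HahnSeries.map_mul (e : R →+* S).toNonUnitalRingHom
  map_add' _ _ := HahnSeries.map_add (e : R →+* S).toAddMonoidHom

@[simp]
lemma coeff_mapRingEquiv [Semiring R] [Semiring S] (e : R ≃+* S) (x : R⟦Γ⟧) (g : Γ) :
    (mapRingEquiv e x).coeff g = e (x.coeff g) := rfl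

end HahnSeries

namespace LaurentSeries

variable {R : Type*} [Zero R]

def bisection (x : R⸨X⸩) (k : ℤ) : R⸨X⸩ :=
  ofSuppBddBelow (fun m => x.coeff (2 * m + k)) ⟨-|x.order| - |k|, fun m hm => by
    by_contra! hlt
    exact hm <| coeff_eq_zero_of_lt_order <| by
      linarith [neg_abs_le x.order, abs_nonneg x.order, le_abs_self k, abs_nonneg k]⟩

@[simp]
lemma coeff_bisection (x : R⸨X⸩) (k m : ℤ) : (bisection x k).coeff m = x.coeff (2 * m + k) :=
  congrFun coeff_ofSuppBddBelow m

end LaurentSeries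

/-- `ι f = f(X²)`, with `X` standing for `t` in `ℝ⸨X⸩` and for `s` in `ℂ⸨X⸩`. -/
def IsSqSubstitution (ι : ℝ⸨X⸩ →+* ℂ⸨X⸩) : Prop :=
  ∀ (f : ℝ⸨X⸩) (m : ℤ), (ι f).coeff (2 * m) = ((f.coeff m : ℝ) : ℂ) ∧ (ι f).coeff (2 * m + 1) = 0

namespace IsSqSubstitution

variable {ι : ℝ⸨X⸩ →+* ℂ⸨X⸩} (h : IsSqSubstitution ι) (f : ℝ⸨X⸩) (a : ℂ) (m : ℤ)
include h

lemma coeff_mul_single_zero_even : (ι f * single 0 a).coeff (2 * m) = f.coeff m * a := by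
  rw [coeff_mul_single_zero, (h f m).1]

lemma coeff_mul_single_zero_odd : (ι f * single 0 a).coeff (2 * m + 1) = 0 := by
  rw [coeff_mul_single_zero, (h f m).2, zero_mul]

lemma coeff_mul_single_one_even : (ι f * single 1 a).coeff (2 * m) = 0 := by
  rw [show 2 * m = 2 * (m - 1) + 1 + 1 by ring, coeff_mul_single_add, (h f _).2, zero_mul]

lemma coeff_mul_single_one_odd : (ι f * single 1 a).coeff (2 * m + 1) = f.coeff m * a := by
  rw [coeff_mul_single_add, (h f m).1]

end IsSqSubstitution

lemma single_zero_I_mul_self : (single 0 I * single 0 I : ℂ⸨X⸩) = -1 := by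
  rw [single_mul_single, add_zero, I_mul_I, single_neg, single_zero_one]

lemma single_one_one_ne_neg : (single 1 1 : ℂ⸨X⸩) ≠ -single 1 1 := by
  simp [eq_neg_iff_add_eq_zero, ← single_add]

lemma single_zero_I_ne_neg : (single 0 I : ℂ⸨X⸩) ≠ -single 0 I := by
  simp [eq_neg_iff_add_eq_zero, ← single_add]

lemma algEquiv_single_zero_I {K : Type*} [CommSemiring K] [Algebra K ℂ⸨X⸩]
    (σ : ℂ⸨X⸩ ≃ₐ[K] ℂ⸨X⸩) :
    σ (single 0 I) = single 0 I ∨ σ (single 0 I) = -single 0 I :=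
  mul_self_eq_mul_self_iff.mp <| by rw [← map_mul, single_zero_I_mul_self, map_neg, map_one]

def biquadFamily : Fin 4 → ℂ⸨X⸩ := ![single 0 1, single 1 1, single 0 I, single 1 I]

section ExtensionOfLaurentSeries

variable [Algebra ℝ⸨X⸩ ℂ⸨X⸩] (h : IsSqSubstitution (algebraMap ℝ⸨X⸩ ℂ⸨X⸩))
include h

lemma coeff_sum_smul_biquadFamily_even (c : Fin 4 → ℝ⸨X⸩) (m : ℤ) :
    (∑ j, c j • biquadFamily j).coeff (2 * m) = (c 0).coeff m + (c 2).coeff m * I := by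
  simp [Fin.sum_univ_four, Algebra.smul_def, biquadFamily, h.coeff_mul_single_zero_even,
    h.coeff_mul_single_one_even, (h (c 0) m).1]

lemma coeff_sum_smul_biquadFamily_odd (c : Fin 4 → ℝ⸨X⸩) (m : ℤ) :
    (∑ j, c j • biquadFamily j).coeff (2 * m + 1) = (c 1).coeff m + (c 3).coeff m * I := by
  simp [Fin.sum_univ_four, Algebra.smul_def, biquadFamily, h.coeff_mul_single_zero_odd,
    h.coeff_mul_single_one_odd, (h (c 0) m).2]

lemma linearIndependent_biquadFamily : LinearIndependent ℝ⸨X⸩ biquadFamily := by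
  refine Fintype.linearIndependent_iff.mpr fun c hc => ?_
  have hparts : ∀ m, ((c 0).coeff m = 0 ∧ (c 2).coeff m = 0) ∧
      ((c 1).coeff m = 0 ∧ (c 3).coeff m = 0) := fun m => by
    have heven := coeff_sum_smul_biquadFamily_even h c m
    have hodd := coeff_sum_smul_biquadFamily_odd h c m
    rw [hc, coeff_zero, eq_comm, ← mk_eq_add_mul_I, Complex.ext_iff] at heven hodd
    exact ⟨heven, hodd⟩
  intro j
  ext m
  fin_cases j <;> simp [hparts m]

lemma top_le_span_biquadFamily : ⊤ ≤ Submodule.span ℝ⸨X⸩ (Set.range biquadFamily) := by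
  intro x _
  rw [Submodule.mem_span_range_iff_exists_fun]
  refine ⟨![(bisection x 0).map reAddGroupHom, (bisection x 1).map reAddGroupHom,
    (bisection x 0).map imAddGroupHom, (bisection x 1).map imAddGroupHom], ?_⟩
  ext n
  obtain ⟨m, rfl | rfl⟩ := Int.even_or_odd' n
  · simp [coeff_sum_smul_biquadFamily_even h, re_add_im]
  · simp [coeff_sum_smul_biquadFamily_odd h, re_add_im]

def biquadBasis : Module.Basis (Fin 4) ℝ⸨X⸩ ℂ⸨X⸩ :=
  .mk (linearIndependent_biquadFamily h) (top_le_span_biquadFamily h)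

lemma coe_biquadBasis : ⇑(biquadBasis h) = biquadFamily :=
  Module.Basis.coe_mk _ _

lemma finrank_eq_four : Module.finrank ℝ⸨X⸩ ℂ⸨X⸩ = 4 := by
  simp [Module.finrank_eq_card_basis (biquadBasis h)]

lemma algebraMap_single_one_one :
    algebraMap ℝ⸨X⸩ ℂ⸨X⸩ (single 1 1) = single 1 1 * single 1 1 := by
  rw [single_mul_single, mul_one]
  ext n
  obtain ⟨m, rfl | rfl⟩ := Int.even_or_odd' n
  · rw [(h _ m).1]
    rcases eq_or_ne m 1 with rfl | hm
    · simp
    · rw [coeff_single_of_ne hm, coeff_single_of_ne (by omega), ofReal_zero]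
  · rw [(h _ m).2, coeff_single_of_ne (by omega)]

lemma algEquiv_single_one_one (σ : Gal(ℂ⸨X⸩/ℝ⸨X⸩)) :
    σ (single 1 1) = single 1 1 ∨ σ (single 1 1) = -single 1 1 :=
  mul_self_eq_mul_self_iff.mp <| by
    rw [← map_mul, ← algebraMap_single_one_one h, σ.commutes]

lemma algEquiv_ext_of_single {σ τ : Gal(ℂ⸨X⸩/ℝ⸨X⸩)} (hs : σ (single 1 1) = τ (single 1 1))
    (hi : σ (single 0 I) = τ (single 0 I)) : σ = τ := by
  have hsi : (single 1 I : ℂ⸨X⸩) = single 0 I * single 1 1 := by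
    rw [single_mul_single, zero_add, mul_one]
  refine AlgEquiv.toLinearEquiv_injective <| (biquadBasis h).ext' fun j => ?_
  rw [coe_biquadBasis h]
  fin_cases j
  · simp [biquadFamily, single_zero_one]
  · exact hs
  · exact hi
  · change σ (single 1 I) = τ (single 1 I)
    rw [hsi, map_mul, map_mul, hs, hi]

lemma algEquiv_mul_self (σ : Gal(ℂ⸨X⸩/ℝ⸨X⸩)) : σ * σ = 1 := by
  refine algEquiv_ext_of_single h ?_ ?_
  · rcases algEquiv_single_one_one h σ with hs | hs <;> simp [hs]
  · rcases algEquiv_single_zero_I σ with hi | hi <;> simp [hi]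

def negXAut : Gal(ℂ⸨X⸩/ℝ⸨X⸩) :=
  AlgEquiv.ofRingEquiv (f := twistEquiv (zpowersHom ℂˣ (-1))) fun x => by
    ext n
    obtain ⟨m, rfl | rfl⟩ := Int.even_or_odd' n
    · simp [Even.neg_one_zpow]
    · simp [(h x m).2]

def conjAut : Gal(ℂ⸨X⸩/ℝ⸨X⸩) :=
  AlgEquiv.ofRingEquiv (f := mapRingEquiv conjAe.toRingEquiv) fun x => by
    ext n
    obtain ⟨m, rfl | rfl⟩ := Int.even_or_odd' n
    · simp [(h x m).1]
    · simp [(h x m).2]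

lemma negXAut_single_one_one : negXAut h (single 1 1) = -single 1 1 := by
  simp [negXAut, twist_single]

lemma negXAut_single_zero_I : negXAut h (single 0 I) = single 0 I := by
  simp [negXAut, twist_single]

lemma conjAut_single_one_one : conjAut h (single 1 1) = single 1 1 := by
  ext n
  simp [conjAut, coeff_single, apply_ite]

lemma conjAut_single_zero_I : conjAut h (single 0 I) = -single 0 I := by
  ext n
  simp [conjAut, coeff_single, apply_ite]

lemma negXAut_ne_one : negXAut h ≠ 1 := fun h1 =>
  single_one_one_ne_neg (by rw [← negXAut_single_one_one h, h1, AlgEquiv.one_apply])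

lemma conjAut_ne_one : conjAut h ≠ 1 := fun h1 =>
  single_zero_I_ne_neg (by rw [← conjAut_single_zero_I h, h1, AlgEquiv.one_apply])

lemma negXAut_ne_conjAut : negXAut h ≠ conjAut h := fun h1 =>
  single_one_one_ne_neg (by rw [← negXAut_single_one_one h, h1, conjAut_single_one_one h])

lemma exponent_algEquiv : Monoid.exponent Gal(ℂ⸨X⸩/ℝ⸨X⸩) = 2 := by
  have : Nontrivial Gal(ℂ⸨X⸩/ℝ⸨X⸩) := ⟨⟨_, _, negXAut_ne_one h⟩⟩
  have hdvd : Monoid.exponent Gal(ℂ⸨X⸩/ℝ⸨X⸩) ∣ 2 :=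
    Monoid.exponent_dvd_of_forall_pow_eq_one fun σ => by rw [sq, algEquiv_mul_self h]
  rcases (Nat.dvd_prime Nat.prime_two).mp hdvd with h1 | h2
  · exact absurd (Monoid.exp_eq_one_iff.mp h1) (not_subsingleton _)
  · exact h2

lemma card_algEquiv : Nat.card Gal(ℂ⸨X⸩/ℝ⸨X⸩) = 4 := by
  classical
  have := Module.Finite.of_basis (biquadBasis h)
  refine le_antisymm ?_ ?_
  · rw [Nat.card_eq_fintype_card, ← finrank_eq_four h]
    exact AlgEquiv.card_le
  · have hprod := mul_notMem_of_exponent_two (exponent_algEquiv h) (negXAut_ne_one h)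
      (conjAut_ne_one h) (negXAut_ne_conjAut h)
    have hfour : ({negXAut h * conjAut h, negXAut h, conjAut h, 1} :
        Finset Gal(ℂ⸨X⸩/ℝ⸨X⸩)).card = 4 := by
      rw [Finset.card_insert_of_notMem (by simpa using hprod), Finset.card_eq_three.mpr
        ⟨_, _, _, negXAut_ne_conjAut h, negXAut_ne_one h, conjAut_ne_one h, rfl⟩]
    rw [Nat.card_eq_fintype_card, ← hfour]
    exact Finset.card_le_univ _

lemma isKleinFour_algEquiv : IsKleinFour Gal(ℂ⸨X⸩/ℝ⸨X⸩) :=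
  ⟨card_algEquiv h, exponent_algEquiv h⟩

end ExtensionOfLaurentSeries

/-- Embed `K = ℝ((t))` into `L = ℂ((s))` by the field homomorphism `ι` acting
as the inclusion `ℝ ↪ ℂ` on coefficients and sending `t` to `s²` (so the
coefficient of `ι f` at `2m` is the coefficient of `f` at `m`, and the odd
coefficients vanish).  Then `L/K` is a Galois extension of degree 4 whose
Galois group is the Klein four-group `ℤ/2 × ℤ/2`. -/
theorem complex_laurent_over_real_laurent_klein_four
    (ι : LaurentSeries ℝ →+* LaurentSeries ℂ)
    (hι : ∀ (f : LaurentSeries ℝ) (m : ℤ),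
      (ι f).coeff (2 * m) = ((f.coeff m : ℝ) : ℂ) ∧ (ι f).coeff (2 * m + 1) = 0)
    [alg : Algebra (LaurentSeries ℝ) (LaurentSeries ℂ)]
    (halg : algebraMap (LaurentSeries ℝ) (LaurentSeries ℂ) = ι) :
    IsGalois (LaurentSeries ℝ) (LaurentSeries ℂ) ∧
      Module.finrank (LaurentSeries ℝ) (LaurentSeries ℂ) = 4 ∧
      Nonempty ((LaurentSeries ℂ ≃ₐ[LaurentSeries ℝ] LaurentSeries ℂ) ≃*
        (Multiplicative (ZMod 2) × Multiplicative (ZMod 2))) := by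
  subst halg
  have := Module.Finite.of_basis (biquadBasis hι)
  have := isKleinFour_algEquiv hι
  refine ⟨IsGalois.of_card_aut_eq_finrank (F := ℝ⸨X⸩) (E := ℂ⸨X⸩) ?_, finrank_eq_four hι, ?_⟩
  · rw [IsKleinFour.card_four, finrank_eq_four hι]
  · obtain ⟨e⟩ := IsKleinFour.nonempty_mulEquiv (G₁ := Gal(ℂ⸨X⸩/ℝ⸨X⸩))
      (G₂ := Multiplicative (ZMod 2 × ZMod 2))
    exact ⟨e.trans (MulEquiv.prodMultiplicative _ _)⟩
end
end
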